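/- Let C > 0 be a constant and consider the random bipartite graph G(m, m, q) with q = (log m)/m. Then for all sufficiently large m, with probability at least 1 − 1/m^C the graph contains a matching of size at least m − m/(log m). -/

import Mathlib

/-!
Put `k = ⌊m / log m⌋`. By the deficiency form of Hall's theorem, if there is no matching of
size `m - k`, some set `A` of left vertices has fewer than `|A| - k` neighbours; then `A` and
the complement `B` of its neighbourhood span no edge and `|A| + |B| > m + k`. If `a ≤ b` are
the two sizes, then `a > k`, so `a log m > m`, and `b ≥ m / 2`; since `m - b < a`, both
`C(m, a)` and `C(m, b) = C(m, m - b)` are at most `(e m / a)^a ≤ (e log m)^a`, and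
`C(m, a) C(m, b) (1 - q)^(a b) ≤ (e log m)^(2a) e^(-a log m / 2) ≤ e^(-m / 4)`.
A union bound over the `(m + 1)^2` pairs of sizes bounds the failure probability by
`(m + 1)^2 e^(-m / 4) ≤ m^(-C)`.
-/

open Filter

noncomputable section
open scoped Classical

/-- The probability that the random bipartite graph with parts `Fin a` and `Fin b`, in which
each pair is an edge independently with probability `p`, satisfies the property `P`. -/
def bipProb (a b : ℕ) (p : ℝ) (P : (Fin a → Fin b → Prop) → Prop) : ℝ :=
  ∑ f : Fin a → Fin b → Bool,
    if P (fun x y => f x y = true) then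
      p ^ (Finset.univ.filter (fun q : Fin a × Fin b => f q.1 q.2 = true)).card *
        (1 - p) ^ (Finset.univ.filter (fun q : Fin a × Fin b => f q.1 q.2 = false)).card
    else 0

open Finset Real

section bipProb

variable {a b : ℕ} {p : ℝ}

lemma bipProb_eq_sum_prod (P : (Fin a → Fin b → Prop) → Prop) :
    bipProb a b p P = ∑ f : Fin a → Fin b → Bool,
      if P (fun x y => f x y = true) then ∏ x, ∏ y, (if f x y then p else 1 - p) else 0 := by
  refine Fintype.sum_congr _ _ fun f => ?_
  rw [← Fintype.prod_prod_type' (f := fun x y => if f x y then p else 1 - p), prod_ite,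
    prod_const, prod_const]
  simp only [Bool.not_eq_true]

lemma bipProb_mono (hp₀ : 0 ≤ p) (hp₁ : p ≤ 1) {P Q : (Fin a → Fin b → Prop) → Prop}
    (h : ∀ E, P E → Q E) : bipProb a b p P ≤ bipProb a b p Q := by
  refine sum_le_sum fun f _ => ?_
  split_ifs with hP hQ
  · exact le_rfl
  · exact absurd (h _ hP) hQ
  · exact mul_nonneg (pow_nonneg hp₀ _) (pow_nonneg (sub_nonneg.2 hp₁) _)
  · exact le_rfl

lemma bipProb_exists_le_sum (hp₀ : 0 ≤ p) (hp₁ : p ≤ 1) {ι : Type*} (I : Finset ι)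
    (Q : ι → (Fin a → Fin b → Prop) → Prop) :
    bipProb a b p (fun E => ∃ i ∈ I, Q i E) ≤ ∑ i ∈ I, bipProb a b p (Q i) := by
  unfold bipProb
  rw [sum_comm]
  refine sum_le_sum fun f _ => ?_
  have hw : 0 ≤ p ^ (univ.filter (fun q : Fin a × Fin b => f q.1 q.2 = true)).card *
      (1 - p) ^ (univ.filter (fun q : Fin a × Fin b => f q.1 q.2 = false)).card :=
    mul_nonneg (pow_nonneg hp₀ _) (pow_nonneg (sub_nonneg.2 hp₁) _)
  split_ifs with hex
  · obtain ⟨i, hi, hQ⟩ := hex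
    refine le_trans ?_ (single_le_sum (fun j _ => ?_) hi)
    · simp only [hQ, if_true, le_refl]
    · split_ifs <;> simp [hw]
  · exact sum_nonneg fun j _ => by split_ifs <;> simp [hw]

lemma bipProb_noEdges (A : Finset (Fin a)) (B : Finset (Fin b)) :
    bipProb a b p (fun E => ∀ x ∈ A, ∀ y ∈ B, ¬ E x y) = (1 - p) ^ (#A * #B) := by
  -- Absorbing the constraint into the factors makes the sum over configurations factorise.
  set v : Fin a → Fin b → Bool → ℝ := fun x y c =>
    if x ∈ A ∧ y ∈ B ∧ c = true then 0 else if c then p else 1 - p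
  have hsum : ∀ x y, ∑ c, v x y c = if x ∈ A ∧ y ∈ B then 1 - p else 1 := by
    intro x y
    by_cases hx : x ∈ A <;> by_cases hy : y ∈ B <;> simp [v, hx, hy]
  calc bipProb a b p (fun E => ∀ x ∈ A, ∀ y ∈ B, ¬ E x y)
      = ∑ f : Fin a → Fin b → Bool, ∏ x, ∏ y, v x y (f x y) := by
        rw [bipProb_eq_sum_prod]
        refine Fintype.sum_congr _ _ fun f => ?_
        split_ifs with h
        · exact Fintype.prod_congr _ _ fun x => Fintype.prod_congr _ _ fun y =>
            (if_neg fun ⟨hx, hy, hxy⟩ => h x hx y hy hxy).symm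
        · push Not at h
          obtain ⟨x, hx, y, hy, hxy⟩ := h
          refine (prod_eq_zero (mem_univ x) (prod_eq_zero (mem_univ y) ?_)).symm
          simp [v, hx, hy, hxy]
    _ = ∏ x, ∏ y, ∑ c, v x y c := by simp only [Fintype.prod_sum]
    _ = (1 - p) ^ (#A * #B) := by
        simp only [hsum, ite_and, prod_ite_irrel, prod_const_one, Fintype.prod_ite_mem, prod_const,
          ← pow_mul, mul_comm]

lemma bipProb_add_bipProb_not (P : (Fin a → Fin b → Prop) → Prop) :
    bipProb a b p P + bipProb a b p (fun E => ¬ P E) = 1 := by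
  have htotal := bipProb_noEdges (p := p) (∅ : Finset (Fin a)) (∅ : Finset (Fin b))
  simp only [notMem_empty, IsEmpty.forall_iff, implies_true, card_empty, mul_zero,
    pow_zero] at htotal
  rw [← htotal, bipProb, bipProb, bipProb, ← sum_add_distrib]
  refine Fintype.sum_congr _ _ fun f => ?_
  split_ifs <;> simp_all

end bipProb

def HasMatchingOfSize {α β : Type*} (E : α → β → Prop) (n : ℕ) : Prop :=
  ∃ s : Finset α, ∃ f : α → β, Set.InjOn f s ∧ (∀ x ∈ s, E x (f x)) ∧ n ≤ #s

section Hall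

variable {α β : Type*} [Fintype α] [Nonempty β]

theorem hasMatchingOfSize_of_card_le_card_biUnion_add [DecidableEq β] (N : α → Finset β)
    (k : ℕ) (h : ∀ A : Finset α, #A ≤ #(A.biUnion N) + k) :
    HasMatchingOfSize (fun x y => y ∈ N x) (Fintype.card α - k) := by
  -- Hall's theorem after adding `k` new vertices adjacent to everything in `α`.
  set t : α → Finset (β ⊕ Fin k) := fun x => (N x).disjSum univ
  have hHall : ∀ A : Finset α, #A ≤ #(A.biUnion t) := by
    intro A
    rcases A.eq_empty_or_nonempty with rfl | ⟨x₀, hx₀⟩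
    · simp
    have hsub : (A.biUnion N).disjSum univ ⊆ A.biUnion t := by
      rintro (y | j) hy
      · obtain ⟨x, hx, hyx⟩ := mem_biUnion.1 (inl_mem_disjSum.1 hy)
        exact mem_biUnion.2 ⟨x, hx, inl_mem_disjSum.2 hyx⟩
      · exact mem_biUnion.2 ⟨x₀, hx₀, inr_mem_disjSum.2 (mem_univ j)⟩
    calc #A ≤ #(A.biUnion N) + k := h A
      _ = #((A.biUnion N).disjSum univ) := by rw [card_disjSum, card_univ, Fintype.card_fin]
      _ ≤ #(A.biUnion t) := card_le_card hsub
  obtain ⟨g, hg_inj, hg_mem⟩ := (all_card_le_biUnion_card_iff_exists_injective t).1 hHall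
  set s := univ.filter fun x => (g x).isLeft
  have hg_left : ∀ x ∈ s, ∃ y, g x = Sum.inl y := fun x hx =>
    Sum.isLeft_iff.1 (mem_filter.1 hx).2
  refine ⟨s, fun x => (g x).elim id fun _ => Classical.arbitrary β, ?_, ?_, ?_⟩
  · intro x₁ hx₁ x₂ hx₂ hf
    obtain ⟨y₁, hy₁⟩ := hg_left x₁ hx₁
    obtain ⟨y₂, hy₂⟩ := hg_left x₂ hx₂
    simp only [hy₁, hy₂, Sum.elim_inl, id] at hf
    exact hg_inj (by rw [hy₁, hy₂, hf])
  · intro x hx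
    obtain ⟨y, hy⟩ := hg_left x hx
    have := hg_mem x
    rw [hy] at this
    simpa only [hy, Sum.elim_inl, id] using inl_mem_disjSum.1 this
  · have hright : #sᶜ ≤ k := by
      have hmaps : ∀ x ∈ sᶜ, g x ∈ (univ : Finset (Fin k)).map Function.Embedding.inr := by
        intro x hx
        simp only [s, mem_compl, mem_filter, mem_univ, true_and, Bool.not_eq_true,
          Sum.isLeft_eq_false, Sum.isRight_iff] at hx
        obtain ⟨j, hj⟩ := hx
        simp [hj]
      simpa using card_le_card_of_injOn g hmaps hg_inj.injOn
    have := card_add_card_compl s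
    omega

theorem exists_noEdges_of_not_hasMatchingOfSize [Fintype β] (E : α → β → Prop) (k : ℕ)
    (h : ¬ HasMatchingOfSize E (Fintype.card α - k)) :
    ∃ A : Finset α, ∃ B : Finset β, Fintype.card β + k < #A + #B ∧
      ∀ x ∈ A, ∀ y ∈ B, ¬ E x y := by
  set N : α → Finset β := fun x => univ.filter (E x)
  by_contra hnone
  refine h ?_
  obtain ⟨s, f, hf_inj, hf_mem, hs⟩ := hasMatchingOfSize_of_card_le_card_biUnion_add N k
    fun A => by
      by_contra hA
      refine hnone ⟨A, (A.biUnion N)ᶜ, ?_, fun x hx y hy hxy =>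
        mem_compl.1 hy (mem_biUnion.2 ⟨x, hx, mem_filter.2 ⟨mem_univ y, hxy⟩⟩)⟩
      have := card_add_card_compl (A.biUnion N)
      omega
  exact ⟨s, f, hf_inj, fun x hx => (mem_filter.1 (hf_mem x hx)).2, hs⟩

end Hall

theorem Nat.choose_le_exp_mul_div_pow {m j a : ℕ} (hj : j ≤ a) (ha : 0 < a) (ham : a ≤ m) :
    (m.choose j : ℝ) ≤ (exp 1 * m / a) ^ a := by
  -- Compare `C(m, j) x^a` with the binomial expansion of `(1 + x)^m ≤ e^a`, where `x = a/m`.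
  have hm : (0 : ℝ) < m := by exact_mod_cast ha.trans_le ham
  set x : ℝ := a / m
  have hx₀ : 0 < x := by positivity
  have hx₁ : x ≤ 1 := div_le_one_of_le₀ (by exact_mod_cast ham) hm.le
  have hbinom : (m.choose j : ℝ) * x ^ j ≤ (x + 1) ^ m := by
    rw [add_pow]
    refine le_trans (le_of_eq (by ring)) (single_le_sum (f := fun i => x ^ i * 1 ^ (m - i) *
      (m.choose i : ℝ)) (fun i _ => by positivity) (mem_range.2 (by omega)))
  have hexp : (x + 1) ^ m ≤ exp a := by
    calc (x + 1) ^ m ≤ exp x ^ m := pow_le_pow_left₀ (by positivity) (add_one_le_exp x) m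
      _ = exp a := by rw [← exp_nat_mul, mul_div_cancel₀ _ hm.ne']
  have hpow : x ^ a ≤ x ^ j := pow_le_pow_of_le_one hx₀.le hx₁ hj
  calc (m.choose j : ℝ) = (m.choose j : ℝ) * x ^ a / x ^ a := by field_simp
    _ ≤ exp a / x ^ a := by
      gcongr
      exact (mul_le_mul_of_nonneg_left hpow (by positivity)).trans (hbinom.trans hexp)
    _ = (exp 1 * m / a) ^ a := by
      rw [← exp_one_pow, div_pow, div_pow, mul_pow]; field_simp

theorem choose_mul_choose_mul_one_sub_pow_le {m a b : ℕ} {L : ℝ} (hm : 0 < m) (hLm : L ≤ m)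
    (hL : 2 + 2 * log L ≤ L / 4) (ha : a ≤ m) (hb : b ≤ m) (hab : m ≤ a + b)
    (haL : m ≤ a * L) (hbL : m ≤ b * L) :
    (m.choose a : ℝ) * m.choose b * (1 - L / m) ^ (a * b) ≤ exp (-(m / 4)) := by
  wlog hba : a ≤ b generalizing a b
  · simpa only [mul_comm, add_comm] using this hb ha (by omega) hbL haL (by omega)
  have hm' : (0 : ℝ) < m := by exact_mod_cast hm
  have hL₀ : 0 < L := by
    by_contra! h
    nlinarith [(Nat.cast_nonneg a : (0 : ℝ) ≤ a)]
  have ha₀ : 0 < a := by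
    by_contra! h
    simp only [Nat.le_zero.1 h, Nat.cast_zero, zero_mul] at haL
    linarith
  have hchoose : ∀ j ≤ a, (m.choose j : ℝ) ≤ exp (a * (1 + log L)) := by
    intro j hj
    refine (Nat.choose_le_exp_mul_div_pow hj ha₀ ha).trans ?_
    have hmL : (m : ℝ) / a ≤ L := div_le_of_le_mul₀ (by positivity) hL₀.le (by linarith)
    calc (exp 1 * m / a) ^ a ≤ (exp 1 * L) ^ a := by
          rw [mul_div_assoc]; gcongr
      _ = exp (a * (1 + log L)) := by rw [exp_nat_mul, exp_add, exp_log hL₀]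
  have hchoose_b : (m.choose b : ℝ) ≤ exp (a * (1 + log L)) := by
    rw [← Nat.choose_symm hb]; exact hchoose _ (by omega)
  have hpow : (1 - L / m) ^ (a * b) ≤ exp (-(a * L / 2)) := by
    have hb2 : (m : ℝ) ≤ 2 * b := by exact_mod_cast (by omega : m ≤ 2 * b)
    calc (1 - L / m) ^ (a * b) ≤ exp (-(L / m)) ^ (a * b) :=
          pow_le_pow_left₀ (sub_nonneg.2 ((div_le_one hm').2 hLm)) (one_sub_le_exp_neg _) _
      _ = exp (-(a * L * (b / m))) := by
          rw [← exp_nat_mul]; push_cast; ring_nf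
      _ ≤ exp (-(a * L / 2)) := by
          have hhalf : (1 : ℝ) / 2 ≤ b / m := by rw [div_le_div_iff₀ two_pos hm']; linarith
          rw [← mul_one_div (a * L)]
          gcongr
  calc (m.choose a : ℝ) * m.choose b * (1 - L / m) ^ (a * b)
      ≤ exp (a * (1 + log L)) * exp (a * (1 + log L)) * exp (-(a * L / 2)) := by
        gcongr
        · exact pow_nonneg (sub_nonneg.2 ((div_le_one hm').2 hLm)) _
        · exact hchoose a le_rfl
    _ = exp (a * (2 + 2 * log L) - a * L / 2) := by rw [← exp_add, ← exp_add]; ring_nf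
    _ ≤ exp (-(m / 4)) := exp_le_exp.2 (by nlinarith [(Nat.cast_nonneg a : (0 : ℝ) ≤ a)])

theorem eventually_add_mul_log_le_mul (c d : ℝ) {ε : ℝ} (hε : 0 < ε) :
    ∀ᶠ x in atTop, d + c * log x ≤ ε * x := by
  filter_upwards [(isLittleO_log_id_atTop.const_mul_left c).def (half_pos hε),
    eventually_ge_atTop (max 0 (2 * d / ε))] with x hlog hx
  have hx₀ : 0 ≤ x := (le_max_left _ _).trans hx
  rw [Real.norm_eq_abs, Real.norm_eq_abs, id, abs_of_nonneg hx₀] at hlog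
  have hd : d ≤ ε / 2 * x := by
    have := (le_max_right _ _).trans hx
    rw [div_le_iff₀ hε] at this
    linarith
  linarith [le_abs_self (c * log x)]

theorem sq_add_one_mul_exp_neg_le_one_div_rpow {x C : ℝ} (hx : 1 ≤ x)
    (h : log 4 + (2 + C) * log x ≤ x / 4) :
    (x + 1) ^ 2 * exp (-(x / 4)) ≤ 1 / x ^ C := by
  have hx₀ : 0 < x := by linarith
  have hsq : (x + 1) ^ 2 ≤ exp (log 4 + 2 * log x) := by
    rw [exp_add, exp_log four_pos, ← log_rpow hx₀, exp_log (by positivity)]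
    norm_cast
    nlinarith
  calc (x + 1) ^ 2 * exp (-(x / 4)) ≤ exp (log 4 + 2 * log x) * exp (-(x / 4)) := by gcongr
    _ ≤ exp (-(C * log x)) := by rw [← exp_add]; exact exp_le_exp.2 (by linarith)
    _ = 1 / x ^ C := by rw [rpow_def_of_pos hx₀, exp_neg, one_div, mul_comm]

theorem bipProb_exists_card_eq_noEdges_le {a b : ℕ} {p : ℝ} (hp₀ : 0 ≤ p) (hp₁ : p ≤ 1)
    (i j : ℕ) :
    bipProb a b p (fun E => ∃ A : Finset (Fin a), ∃ B : Finset (Fin b), #A = i ∧ #B = j ∧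
      ∀ x ∈ A, ∀ y ∈ B, ¬ E x y) ≤ a.choose i * b.choose j * (1 - p) ^ (i * j) := by
  set R := powersetCard i (univ : Finset (Fin a)) ×ˢ powersetCard j (univ : Finset (Fin b))
  calc _ ≤ bipProb a b p (fun E => ∃ AB ∈ R, ∀ x ∈ AB.1, ∀ y ∈ AB.2, ¬ E x y) :=
        bipProb_mono hp₀ hp₁ fun E ⟨A, B, hA, hB, hAB⟩ =>
          ⟨(A, B), mem_product.2 ⟨mem_powersetCard_univ.2 hA, mem_powersetCard_univ.2 hB⟩,
            hAB⟩
    _ ≤ ∑ AB ∈ R, bipProb a b p (fun E => ∀ x ∈ AB.1, ∀ y ∈ AB.2, ¬ E x y) :=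
        bipProb_exists_le_sum hp₀ hp₁ _ _
    _ = ∑ _AB ∈ R, (1 - p) ^ (i * j) := by
        refine sum_congr rfl fun AB hAB => ?_
        obtain ⟨hA, hB⟩ := mem_product.1 hAB
        rw [bipProb_noEdges, mem_powersetCard_univ.1 hA, mem_powersetCard_univ.1 hB]
    _ = a.choose i * b.choose j * (1 - p) ^ (i * j) := by
        simp [R, card_powersetCard]

theorem one_sub_le_bipProb_hasMatchingOfSize {m k : ℕ} {L : ℝ} (hm : 0 < m) (hLm : L ≤ m)
    (hk : m < (k + 1) * L) (hL : 2 + 2 * log L ≤ L / 4) :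
    1 - (m + 1) ^ 2 * exp (-(m / 4)) ≤
      bipProb m m (L / m) (fun E => HasMatchingOfSize E (m - k)) := by
  have hm' : (0 : ℝ) < m := by exact_mod_cast hm
  have hL₀ : 0 < L := by nlinarith [(Nat.cast_nonneg k : (0 : ℝ) ≤ k)]
  have hq₀ : 0 ≤ L / m := by positivity
  have hq₁ : L / m ≤ 1 := (div_le_one hm').2 hLm
  have : Nonempty (Fin m) := ⟨⟨0, hm⟩⟩
  have hside : ∀ c : ℕ, k + 1 ≤ c → (m : ℝ) ≤ c * L := fun c hc => by
    have : (k : ℝ) + 1 ≤ c := by exact_mod_cast hc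
    nlinarith
  set S := (range (m + 1) ×ˢ range (m + 1)).filter fun ab => m + k < ab.1 + ab.2
  suffices hbad : bipProb m m (L / m) (fun E => ¬ HasMatchingOfSize E (m - k)) ≤
      (m + 1) ^ 2 * exp (-(m / 4)) by
    linarith [bipProb_add_bipProb_not (a := m) (b := m) (p := L / m)
      fun E => HasMatchingOfSize E (m - k)]
  calc _ ≤ bipProb m m (L / m) (fun E => ∃ ab ∈ S, ∃ A B : Finset (Fin m), #A = ab.1 ∧
          #B = ab.2 ∧ ∀ x ∈ A, ∀ y ∈ B, ¬ E x y) := by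
        refine bipProb_mono hq₀ hq₁ fun E hE => ?_
        obtain ⟨A, B, hAB, hnone⟩ :=
          exists_noEdges_of_not_hasMatchingOfSize E k (by simpa only [Fintype.card_fin] using hE)
        have hA := card_le_univ A
        have hB := card_le_univ B
        simp only [Fintype.card_fin] at hA hB hAB
        exact ⟨(#A, #B), by simp [S]; omega, A, B, rfl, rfl, hnone⟩
    _ ≤ ∑ ab ∈ S, bipProb m m (L / m) (fun E => ∃ A B : Finset (Fin m), #A = ab.1 ∧
          #B = ab.2 ∧ ∀ x ∈ A, ∀ y ∈ B, ¬ E x y) := bipProb_exists_le_sum hq₀ hq₁ _ _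
    _ ≤ ∑ _ab ∈ S, exp (-(m / 4)) := by
        refine sum_le_sum fun ab hab => (bipProb_exists_card_eq_noEdges_le hq₀ hq₁ _ _).trans ?_
        simp only [S, mem_filter, mem_product, mem_range] at hab
        exact choose_mul_choose_mul_one_sub_pow_le hm hLm hL (by omega) (by omega) (by omega)
          (hside _ (by omega)) (hside _ (by omega))
    _ ≤ (m + 1) ^ 2 * exp (-(m / 4)) := by
        rw [sum_const, nsmul_eq_mul]
        gcongr
        have : #S ≤ (m + 1) ^ 2 := by
          simpa [sq] using card_filter_le (range (m + 1) ×ˢ range (m + 1)) _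
        exact_mod_cast this

theorem bip_almost_perfect_matching_general (C : ℝ) :
    ∀ᶠ m : ℕ in atTop,
      1 - 1 / (m : ℝ) ^ C ≤
        bipProb m m (Real.log m / m) (fun E =>
          ∃ (s : Finset (Fin m)) (f : Fin m → Fin m),
            Set.InjOn f ↑s ∧ (∀ x ∈ s, E x (f x)) ∧
            (m : ℝ) - m / Real.log m ≤ (s.card : ℝ)) := by
  have hlog := tendsto_log_atTop.comp tendsto_natCast_atTop_atTop
  filter_upwards [eventually_ge_atTop 2,
    hlog.eventually (eventually_add_mul_log_le_mul 2 2 (by norm_num : (0 : ℝ) < 1 / 4)),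
    tendsto_natCast_atTop_atTop.eventually
      (eventually_add_mul_log_le_mul (2 + C) (log 4) (by norm_num : (0 : ℝ) < 1 / 4))]
    with m hm hL hC'
  set L := log m
  replace hL : 2 + 2 * log L ≤ L / 4 := by
    simp only [Function.comp_apply] at hL; linarith
  replace hC' : log 4 + (2 + C) * log m ≤ m / 4 := by linarith
  have hm' : (2 : ℝ) ≤ m := by exact_mod_cast hm
  have hL₀ : 0 < L := log_pos (by linarith)
  have hLm : L ≤ m := (log_le_sub_one_of_pos (by linarith)).trans (by linarith)
  set k := ⌊(m : ℝ) / L⌋₊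
  have hkL : (k : ℝ) ≤ m / L := Nat.floor_le (by positivity)
  have hmk : (m : ℝ) < (k + 1) * L := (div_lt_iff₀ hL₀).1 (Nat.lt_floor_add_one _)
  have htail := sq_add_one_mul_exp_neg_le_one_div_rpow (by linarith) hC'
  refine le_trans (by linarith) ((one_sub_le_bipProb_hasMatchingOfSize (by omega) hLm hmk hL).trans
    (bipProb_mono (div_nonneg hL₀.le (by linarith)) ((div_le_one (by linarith)).2 hLm) ?_))
  rintro E ⟨s, f, hf, hE, hs⟩
  refine ⟨s, f, hf, hE, ?_⟩
  have : (m : ℝ) ≤ #s + k := by exact_mod_cast (by omega : m ≤ #s + k)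
  linarith

/-- for any constant `C > 0`, the random bipartite graph `G(m, m, q)` with
`q = (log m)/m` contains, for all large `m` with probability at least `1 - 1/m^C`,
a matching of size at least `m - m/log m`. -/
theorem bip_almost_perfect_matching (C : ℝ) (hC : 0 < C) :
    ∀ᶠ m : ℕ in atTop,
      1 - 1 / (m : ℝ) ^ C ≤
        bipProb m m (Real.log m / m) (fun E =>
          ∃ (s : Finset (Fin m)) (f : Fin m → Fin m),
            Set.InjOn f ↑s ∧ (∀ x ∈ s, E x (f x)) ∧
            (m : ℝ) - m / Real.log m ≤ (s.card : ℝ)) :=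
  bip_almost_perfect_matching_general C
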